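/- Let (A,μ,α) be a Hom-alternative algebra. Then as(α(x),yx,α(z)) = α²(x)·as(x,y,z) = as(α(x),α(y),zx) for all x,y,z ∈ A. -/
import Mathlib


variable {K A : Type*} [Field K] [CharZero K] [AddCommGroup A] [Module K A]

/-- Hom-associator of a multiplication μ with twisting map α. -/
def homAs (μ : A →ₗ[K] A →ₗ[K] A) (α : A →ₗ[K] A) (x y z : A) : A :=
  μ (μ x y) (α z) - μ (α x) (μ y z)

set_option maxHeartbeats 1000000 in
theorem stmt9 (μ : A →ₗ[K] A →ₗ[K] A) (α : A →ₗ[K] A)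
    (hmult : ∀ x y : A, α (μ x y) = μ (α x) (α y))
    (h1 : ∀ x y : A, homAs μ α x x y = 0)
    (h2 : ∀ x y : A, homAs μ α x y y = 0)
    (h3 : ∀ x y : A, homAs μ α x y x = 0) :
    ∀ x y z : A,
      homAs μ α (α x) (μ y x) (α z) = μ (α (α x)) (homAs μ α x y z) ∧
      homAs μ α (α x) (α y) (μ z x) = μ (α (α x)) (homAs μ α x y z) := by
  have hL : ∀ a b c : A, homAs μ α a b c + homAs μ α b a c = 0 := by
    intro a b c
    have key : homAs μ α a b c + homAs μ α b a c
        = homAs μ α (a + b) (a + b) c - homAs μ α a a c - homAs μ α b b c := by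
      simp only [homAs, map_add, LinearMap.add_apply]
      abel
    rw [key, h1, h1, h1]
    simp
  have hR : ∀ a b c : A, homAs μ α a b c + homAs μ α a c b = 0 := by
    intro a b c
    have key : homAs μ α a b c + homAs μ α a c b
        = homAs μ α a (b + c) (b + c) - homAs μ α a b b - homAs μ α a c c := by
      simp only [homAs, map_add, LinearMap.add_apply]
      abel
    rw [key, h2, h2, h2]
    simp
  intro x y z
  constructor
  · have key : (6 : K) • (homAs μ α (α x) (μ y x) (α z) - μ (α (α x)) (homAs μ α x y z)) =
          ((-1 : K)) • (homAs μ α (α x) (α x) (μ y z) + homAs μ α (α x) (α x) (μ y z)) +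
          ((2 : K)) • (homAs μ α (α x) (α x) (μ y z) + homAs μ α (α x) (μ y z) (α x)) +
          ((1 : K)) • (homAs μ α (α x) (α x) (μ z y) + homAs μ α (α x) (α x) (μ z y)) +
          ((-2 : K)) • (homAs μ α (α x) (α x) (μ z y) + homAs μ α (α x) (μ z y) (α x)) +
          ((-2 : K)) • (homAs μ α (α x) (α y) (μ x z) + homAs μ α (α y) (α x) (μ x z)) +
          ((2 : K)) • (homAs μ α (α x) (α y) (μ x z) + homAs μ α (α x) (μ x z) (α y)) +
          ((-4 : K)) • (homAs μ α (α x) (α y) (μ z x) + homAs μ α (α y) (α x) (μ z x)) +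
          ((2 : K)) • (homAs μ α (α x) (α y) (μ z x) + homAs μ α (α x) (μ z x) (α y)) +
          ((-2 : K)) • (homAs μ α (α x) (α z) (μ x y) + homAs μ α (α z) (α x) (μ x y)) +
          ((-4 : K)) • (homAs μ α (α x) (α z) (μ y x) + homAs μ α (α z) (α x) (μ y x)) +
          ((6 : K)) • (homAs μ α (α x) (α z) (μ y x) + homAs μ α (α x) (μ y x) (α z)) +
          ((-2 : K)) • (homAs μ α (α x) (μ x z) (α y) + homAs μ α (μ x z) (α x) (α y)) +
          ((2 : K)) • (homAs μ α (α y) (α x) (μ x z) + homAs μ α (α y) (μ x z) (α x)) +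
          ((2 : K)) • (homAs μ α (α y) (μ x z) (α x) + homAs μ α (μ x z) (α y) (α x)) +
          ((2 : K)) • (homAs μ α (α z) (α x) (μ x y) + homAs μ α (α z) (μ x y) (α x)) +
          ((4 : K)) • (homAs μ α (α z) (α x) (μ y x) + homAs μ α (α z) (μ y x) (α x)) +
          ((-2 : K)) • (homAs μ α (α z) (μ x y) (α x) + homAs μ α (μ x y) (α z) (α x)) +
          ((-4 : K)) • (homAs μ α (α z) (μ y x) (α x) + homAs μ α (μ y x) (α z) (α x)) +
          ((-4 : K)) • (μ (α (α x)) (homAs μ α x y z + homAs μ α y x z)) +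
          ((4 : K)) • (μ (homAs μ α x y z + homAs μ α y x z) (α (α x))) +
          ((-2 : K)) • (μ (α (α x)) (homAs μ α x y z + homAs μ α x z y)) +
          ((-2 : K)) • (μ (homAs μ α x y z + homAs μ α x z y) (α (α x))) +
          ((2 : K)) • (μ (α (α x)) (homAs μ α x z y + homAs μ α z x y)) +
          ((4 : K)) • (μ (α (α x)) (homAs μ α y x z + homAs μ α y z x)) +
          ((-2 : K)) • (μ (α (α x)) (homAs μ α y z x + homAs μ α z y x)) +
          ((-2 : K)) • (μ (α (α y)) (homAs μ α x x z + homAs μ α x x z)) +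
          ((-1 : K)) • (μ (homAs μ α x x z + homAs μ α x x z) (α (α y))) +
          ((4 : K)) • (μ (α (α y)) (homAs μ α x x z + homAs μ α x z x)) +
          ((2 : K)) • (μ (homAs μ α x x z + homAs μ α x z x) (α (α y))) := by
      simp only [homAs, hmult, map_add, map_sub, LinearMap.add_apply, LinearMap.sub_apply]
      module
    rw [hL (α x) (α x) (μ y z), hR (α x) (α x) (μ y z), hL (α x) (α x) (μ z y), hR (α x) (α x) (μ z y), hL (α x) (α y) (μ x z), hR (α x) (α y) (μ x z), hL (α x) (α y) (μ z x), hR (α x) (α y) (μ z x), hL (α x) (α z) (μ x y), hL (α x) (α z) (μ y x), hR (α x) (α z) (μ y x), hL (α x) (μ x z) (α y), hR (α y) (α x) (μ x z), hL (α y) (μ x z) (α x), hR (α z) (α x) (μ x y), hR (α z) (α x) (μ y x), hL (α z) (μ x y) (α x), hL (α z) (μ y x) (α x), hL x y z, hR x y z, hL x z y, hR y x z, hL y z x, hL x x z, hR x x z] at key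
    simp only [smul_zero, map_zero, LinearMap.zero_apply, add_zero, zero_add] at key
    have h6 : (6 : K) ≠ 0 := by norm_num
    exact sub_eq_zero.mp ((smul_eq_zero.mp key).resolve_left h6)
  · have key : (6 : K) • (homAs μ α (α x) (α y) (μ z x) - μ (α (α x)) (homAs μ α x y z)) =
          ((-2 : K)) • (homAs μ α (α x) (α x) (μ y z) + homAs μ α (α x) (α x) (μ y z)) +
          ((4 : K)) • (homAs μ α (α x) (α x) (μ y z) + homAs μ α (α x) (μ y z) (α x)) +
          ((-1 : K)) • (homAs μ α (α x) (α x) (μ z y) + homAs μ α (α x) (α x) (μ z y)) +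
          ((2 : K)) • (homAs μ α (α x) (α x) (μ z y) + homAs μ α (α x) (μ z y) (α x)) +
          ((-4 : K)) • (homAs μ α (α x) (α y) (μ x z) + homAs μ α (α y) (α x) (μ x z)) +
          ((4 : K)) • (homAs μ α (α x) (α y) (μ x z) + homAs μ α (α x) (μ x z) (α y)) +
          ((-2 : K)) • (homAs μ α (α x) (α y) (μ z x) + homAs μ α (α y) (α x) (μ z x)) +
          ((4 : K)) • (homAs μ α (α x) (α y) (μ z x) + homAs μ α (α x) (μ z x) (α y)) +
          ((-4 : K)) • (homAs μ α (α x) (α z) (μ x y) + homAs μ α (α z) (α x) (μ x y)) +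
          ((-2 : K)) • (homAs μ α (α x) (α z) (μ y x) + homAs μ α (α z) (α x) (μ y x)) +
          ((-4 : K)) • (homAs μ α (α x) (μ x z) (α y) + homAs μ α (μ x z) (α x) (α y)) +
          ((4 : K)) • (homAs μ α (α y) (α x) (μ x z) + homAs μ α (α y) (μ x z) (α x)) +
          ((-2 : K)) • (homAs μ α (α y) (μ x z) (α x) + homAs μ α (μ x z) (α y) (α x)) +
          ((4 : K)) • (homAs μ α (α z) (α x) (μ x y) + homAs μ α (α z) (μ x y) (α x)) +
          ((2 : K)) • (homAs μ α (α z) (α x) (μ y x) + homAs μ α (α z) (μ y x) (α x)) +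
          ((-4 : K)) • (homAs μ α (α z) (μ x y) (α x) + homAs μ α (μ x y) (α z) (α x)) +
          ((-2 : K)) • (homAs μ α (α z) (μ y x) (α x) + homAs μ α (μ y x) (α z) (α x)) +
          ((-2 : K)) • (μ (α (α x)) (homAs μ α x y z + homAs μ α y x z)) +
          ((2 : K)) • (μ (homAs μ α x y z + homAs μ α y x z) (α (α x))) +
          ((-4 : K)) • (μ (α (α x)) (homAs μ α x y z + homAs μ α x z y)) +
          ((2 : K)) • (μ (homAs μ α x y z + homAs μ α x z y) (α (α x))) +
          ((4 : K)) • (μ (α (α x)) (homAs μ α x z y + homAs μ α z x y)) +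
          ((2 : K)) • (μ (α (α x)) (homAs μ α y x z + homAs μ α y z x)) +
          ((2 : K)) • (μ (α (α x)) (homAs μ α y z x + homAs μ α z y x)) +
          ((-1 : K)) • (μ (α (α y)) (homAs μ α x x z + homAs μ α x x z)) +
          ((-2 : K)) • (μ (homAs μ α x x z + homAs μ α x x z) (α (α y))) +
          ((2 : K)) • (μ (α (α y)) (homAs μ α x x z + homAs μ α x z x)) +
          ((4 : K)) • (μ (homAs μ α x x z + homAs μ α x z x) (α (α y))) := by
      simp only [homAs, hmult, map_add, map_sub, LinearMap.add_apply, LinearMap.sub_apply]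
      module
    rw [hL (α x) (α x) (μ y z), hR (α x) (α x) (μ y z), hL (α x) (α x) (μ z y), hR (α x) (α x) (μ z y), hL (α x) (α y) (μ x z), hR (α x) (α y) (μ x z), hL (α x) (α y) (μ z x), hR (α x) (α y) (μ z x), hL (α x) (α z) (μ x y), hL (α x) (α z) (μ y x), hL (α x) (μ x z) (α y), hR (α y) (α x) (μ x z), hL (α y) (μ x z) (α x), hR (α z) (α x) (μ x y), hR (α z) (α x) (μ y x), hL (α z) (μ x y) (α x), hL (α z) (μ y x) (α x), hL x y z, hR x y z, hL x z y, hR y x z, hL y z x, hL x x z, hR x x z] at key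
    simp only [smul_zero, map_zero, LinearMap.zero_apply, add_zero, zero_add] at key
    have h6 : (6 : K) ≠ 0 := by norm_num
    exact sub_eq_zero.mp ((smul_eq_zero.mp key).resolve_left h6)
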